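/- Consider min { h(y) = yᵀQy + 2gᵀy : ‖y‖ ≤ 1, Ay − b ∈ 𝒦 } with λ_Q < 0 and nonempty feasible set. Suppose there exists d ≠ 0 with Qd = λ_Q d, Ad ∈ 𝒦 and gᵀd ≤ 0. Then the convex relaxation min { f(y) = yᵀ(Q − λ_Q I)y + 2gᵀy + λ_Q : ‖y‖ ≤ 1, Ay − b ∈ 𝒦 } has the same optimal value. -/

import Mathlib

/-!
Write `h` for the objective and `f = h + λ (1 - ‖y‖²)` for the relaxed one. Since `λ < 0`,
`f ≤ h` on the unit ball, so the relaxation can only lower the value. Conversely, `d` lies in the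
kernel of the symmetric matrix `Q - λ I`, so moving a feasible `y` along `d` changes `f` by
`2 t gᵀd ≤ 0`, and `Ad ∈ 𝒦` keeps the point feasible. Moving until `‖y + t d‖ = 1`, where `f`
and `h` agree, yields a feasible point with `h (y + t d) ≤ f y`.
-/

open Matrix

theorem csInf_image_le_csInf_image_of_forall_exists_le {α β : Type*}
    [ConditionallyCompleteLattice β] {f g : α → β} {S : Set α} (hf : BddBelow (f '' S))
    (H : ∀ y ∈ S, ∃ z ∈ S, f z ≤ g y) : sInf (f '' S) ≤ sInf (g '' S) := by
  rcases S.eq_empty_or_nonempty with rfl | hS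
  · simp
  refine le_csInf (hS.image g) ?_
  rintro _ ⟨y, hy, rfl⟩
  obtain ⟨z, hz, hzy⟩ := H y hy
  exact (csInf_le hf ⟨z, hz, rfl⟩).trans hzy

theorem Convex.add_mem_of_smul_mem {E : Type*} [AddCommGroup E] [Module ℝ E] {K : Set E}
    (hconv : Convex ℝ K) (hcone : ∀ x ∈ K, ∀ c : ℝ, 0 ≤ c → c • x ∈ K) {x y : E}
    (hx : x ∈ K) (hy : y ∈ K) : x + y ∈ K := by
  have hmid : (1 / 2 : ℝ) • x + (1 / 2 : ℝ) • y ∈ K :=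
    hconv hx hy (by norm_num) (by norm_num) (by norm_num)
  convert hcone _ hmid 2 zero_le_two using 1
  rw [smul_add, smul_smul, smul_smul]
  norm_num

theorem mulVec_add_smul_sub_mem_of_convex {ι κ : Type*} [Fintype ι] {K : Set (κ → ℝ)}
    (hconv : Convex ℝ K) (hcone : ∀ x ∈ K, ∀ c : ℝ, 0 ≤ c → c • x ∈ K)
    {A : Matrix κ ι ℝ} {b : κ → ℝ} {y d : ι → ℝ} {t : ℝ} (hy : A *ᵥ y - b ∈ K)
    (hd : A *ᵥ d ∈ K) (ht : 0 ≤ t) : A *ᵥ (y + t • d) - b ∈ K := by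
  rw [mulVec_add, mulVec_smul, add_sub_right_comm]
  exact hconv.add_mem_of_smul_mem hcone hy (hcone _ hd t ht)

theorem Continuous.bddBelow_image_of_subset_closedBall {E : Type*} [PseudoMetricSpace E]
    [ProperSpace E] {φ : E → ℝ} (hφ : Continuous φ) {S : Set E} {x : E} {r : ℝ}
    (hS : S ⊆ Metric.closedBall x r) : BddBelow (φ '' S) :=
  ((isCompact_closedBall x r).bddBelow_image hφ.continuousOn).mono (Set.image_mono hS)

theorem exists_nonneg_norm_add_smul_eq {E : Type*} [NormedAddCommGroup E] [NormedSpace ℝ E]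
    {y d : E} (hd : d ≠ 0) {r : ℝ} (hy : ‖y‖ ≤ r) : ∃ t : ℝ, 0 ≤ t ∧ ‖y + t • d‖ = r := by
  set T := (r + ‖y‖) / ‖d‖
  have hT : 0 ≤ T := div_nonneg (by linarith [norm_nonneg y]) (norm_nonneg d)
  have hfar : r ≤ ‖y + T • d‖ := by
    have hTd : ‖T • d‖ = r + ‖y‖ := by
      rw [norm_smul, Real.norm_of_nonneg hT, div_mul_cancel₀ _ (norm_ne_zero_iff.mpr hd)]
    have hsub := norm_sub_le (y + T • d) y
    rw [add_sub_cancel_left, hTd] at hsub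
    linarith
  obtain ⟨t, ht, hteq⟩ := intermediate_value_Icc hT (f := fun t : ℝ => ‖y + t • d‖)
    (by fun_prop) ⟨by simpa using hy, hfar⟩
  exact ⟨t, ht.1, hteq⟩

theorem Matrix.IsSymm.dotProduct_mulVec_add_of_mulVec_eq_zero {ι R : Type*} [Fintype ι]
    [CommSemiring R] {M : Matrix ι ι R} (hM : M.IsSymm) {d : ι → R} (hd : M *ᵥ d = 0)
    (y : ι → R) : (y + d) ⬝ᵥ M *ᵥ (y + d) = y ⬝ᵥ M *ᵥ y := by
  have hdy : d ⬝ᵥ M *ᵥ y = 0 := by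
    rw [dotProduct_mulVec, ← mulVec_transpose, hM.eq, hd, zero_dotProduct]
  rw [mulVec_add, hd, add_zero, add_dotProduct, hdy, add_zero]

theorem Matrix.IsSymm.quadratic_add_smul_of_mulVec_eq_zero {ι R : Type*} [Fintype ι]
    [CommSemiring R] {M : Matrix ι ι R} (hM : M.IsSymm) {d : ι → R} (hd : M *ᵥ d = 0)
    (g y : ι → R) (t : R) :
    (y + t • d) ⬝ᵥ M *ᵥ (y + t • d) + 2 * (g ⬝ᵥ (y + t • d)) =
      y ⬝ᵥ M *ᵥ y + 2 * (g ⬝ᵥ y) + 2 * t * (g ⬝ᵥ d) := by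
  have htd : M *ᵥ (t • d) = 0 := by rw [mulVec_smul, hd, smul_zero]
  rw [hM.dotProduct_mulVec_add_of_mulVec_eq_zero htd, dotProduct_add, dotProduct_smul,
    smul_eq_mul]
  ring

theorem Matrix.sub_smul_one_mulVec_eq_zero {ι R : Type*} [Fintype ι] [DecidableEq ι]
    [CommRing R] {Q : Matrix ι ι R} {lam : R} {d : ι → R} (hd : Q *ᵥ d = lam • d) :
    (Q - lam • (1 : Matrix ι ι R)) *ᵥ d = 0 := by
  rw [sub_mulVec, hd, smul_mulVec, one_mulVec, sub_self]

theorem EuclideanSpace.dotProduct_self_eq_norm_sq {ι : Type*} [Fintype ι]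
    (y : EuclideanSpace ℝ ι) : y ⬝ᵥ y = ‖y‖ ^ 2 := by
  rw [← real_inner_self_eq_norm_sq, EuclideanSpace.inner_eq_star_dotProduct, star_trivial]

theorem EuclideanSpace.dotProduct_sub_smul_one_mulVec {ι : Type*} [Fintype ι] [DecidableEq ι]
    (Q : Matrix ι ι ℝ) (lam : ℝ) (y : EuclideanSpace ℝ ι) :
    y ⬝ᵥ (Q - lam • (1 : Matrix ι ι ℝ)) *ᵥ y = y ⬝ᵥ Q *ᵥ y - lam * ‖y‖ ^ 2 := by
  rw [sub_mulVec, smul_mulVec, one_mulVec, dotProduct_sub, dotProduct_smul,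
    dotProduct_self_eq_norm_sq, smul_eq_mul]

theorem conic_TRS_tight_relaxation_general {n m : ℕ} (Q : Matrix (Fin n) (Fin n) ℝ)
    (g : EuclideanSpace ℝ (Fin n)) (lamQ : ℝ)
    (A : Matrix (Fin m) (Fin n) ℝ) (b : Fin m → ℝ) (K : Set (Fin m → ℝ))
    (hQ : Q.IsSymm)
    (hneg : lamQ < 0)
    (hKconv : Convex ℝ K)
    (hKcone : ∀ x ∈ K, ∀ c : ℝ, 0 ≤ c → c • x ∈ K)
    (S : Set (EuclideanSpace ℝ (Fin n)))
    (hS : S = {y : EuclideanSpace ℝ (Fin n) | ‖y‖ ≤ 1 ∧ A.mulVec y - b ∈ K})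
    (hcond : ∃ d : EuclideanSpace ℝ (Fin n), d ≠ 0 ∧
      Q.mulVec d = lamQ • (d : Fin n → ℝ) ∧ A.mulVec d ∈ K ∧ g ⬝ᵥ d ≤ 0) :
    sInf ((fun y : EuclideanSpace ℝ (Fin n) => y ⬝ᵥ Q.mulVec y + 2 * (g ⬝ᵥ y)) '' S) =
      sInf ((fun y : EuclideanSpace ℝ (Fin n) =>
        y ⬝ᵥ (Q - lamQ • (1 : Matrix (Fin n) (Fin n) ℝ)).mulVec y + 2 * (g ⬝ᵥ y) + lamQ) '' S) := by
  obtain ⟨d, hd0, hQd, hAd, hgd⟩ := hcond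
  set h := fun y : EuclideanSpace ℝ (Fin n) => y ⬝ᵥ Q.mulVec y + 2 * (g ⬝ᵥ y)
  set f := fun y : EuclideanSpace ℝ (Fin n) =>
    y ⬝ᵥ (Q - lamQ • (1 : Matrix (Fin n) (Fin n) ℝ)).mulVec y + 2 * (g ⬝ᵥ y) + lamQ
  have hfh (y : EuclideanSpace ℝ (Fin n)) : f y = h y + lamQ * (1 - ‖y‖ ^ 2) := by
    simp only [f, h, EuclideanSpace.dotProduct_sub_smul_one_mulVec]
    ring
  have hball : ∀ y ∈ S, ‖y‖ ≤ 1 := by rw [hS]; exact fun y hy => hy.1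
  have hSball : S ⊆ Metric.closedBall 0 1 := fun y hy => mem_closedBall_zero_iff.mpr (hball y hy)
  have hh_bdd : BddBelow (h '' S) :=
    Continuous.bddBelow_image_of_subset_closedBall (by fun_prop) hSball
  have hf_bdd : BddBelow (f '' S) :=
    Continuous.bddBelow_image_of_subset_closedBall (by fun_prop) hSball
  apply le_antisymm
  · refine csInf_image_le_csInf_image_of_forall_exists_le hh_bdd fun y hy => ?_
    obtain ⟨t, ht, hnorm⟩ := exists_nonneg_norm_add_smul_eq hd0 (hball y hy)
    have hzS : y + t • d ∈ S := by
      rw [hS] at hy ⊢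
      refine ⟨hnorm.le, ?_⟩
      rw [WithLp.ofLp_add, WithLp.ofLp_smul]
      exact mulVec_add_smul_sub_mem_of_convex hKconv hKcone hy.2 hAd ht
    refine ⟨y + t • d, hzS, ?_⟩
    calc h (y + t • d) = f (y + t • d) := by rw [hfh, hnorm]; ring
      _ = f y + 2 * t * (g ⬝ᵥ d) := by
        simp only [f, WithLp.ofLp_add, WithLp.ofLp_smul]
        rw [(hQ.sub (isSymm_one.smul lamQ)).quadratic_add_smul_of_mulVec_eq_zero
          (sub_smul_one_mulVec_eq_zero hQd)]
        ring
      _ ≤ f y := by nlinarith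
  · refine csInf_image_le_csInf_image_of_forall_exists_le hf_bdd fun y hy => ⟨y, hy, ?_⟩
    have hy2 : ‖y‖ ^ 2 ≤ 1 := pow_le_one₀ (norm_nonneg y) (hball y hy)
    rw [hfh]
    nlinarith

theorem conic_TRS_tight_relaxation {n m : ℕ} (Q : Matrix (Fin n) (Fin n) ℝ)
    (g : EuclideanSpace ℝ (Fin n)) (lamQ : ℝ)
    (A : Matrix (Fin m) (Fin n) ℝ) (b : Fin m → ℝ) (K : Set (Fin m → ℝ))
    (hQ : Q.IsSymm)
    (hlb : ∀ y : EuclideanSpace ℝ (Fin n), lamQ * ‖y‖ ^ 2 ≤ y ⬝ᵥ Q.mulVec y)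
    (hev : ∃ v : EuclideanSpace ℝ (Fin n), v ≠ 0 ∧ Q.mulVec v = lamQ • (v : Fin n → ℝ))
    (hneg : lamQ < 0)
    (hKclosed : IsClosed K) (hKconv : Convex ℝ K)
    (hKcone : ∀ x ∈ K, ∀ c : ℝ, 0 ≤ c → c • x ∈ K)
    (S : Set (EuclideanSpace ℝ (Fin n)))
    (hS : S = {y : EuclideanSpace ℝ (Fin n) | ‖y‖ ≤ 1 ∧ A.mulVec y - b ∈ K})
    (hSne : S.Nonempty)
    (hcond : ∃ d : EuclideanSpace ℝ (Fin n), d ≠ 0 ∧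
      Q.mulVec d = lamQ • (d : Fin n → ℝ) ∧ A.mulVec d ∈ K ∧ g ⬝ᵥ d ≤ 0) :
    sInf ((fun y : EuclideanSpace ℝ (Fin n) => y ⬝ᵥ Q.mulVec y + 2 * (g ⬝ᵥ y)) '' S) =
      sInf ((fun y : EuclideanSpace ℝ (Fin n) =>
        y ⬝ᵥ (Q - lamQ • (1 : Matrix (Fin n) (Fin n) ℝ)).mulVec y + 2 * (g ⬝ᵥ y) + lamQ) '' S) :=
  conic_TRS_tight_relaxation_general Q g lamQ A b K hQ hneg hKconv hKcone S hS hcond
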